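/- For each k > 0 there exists M_k > 0 such that the analytically continued lognormal Laplace transform φ satisfies |φ(z)| ≤ M_k |z|^{-k} for all z ∈ ℂ \ (-∞,0]. Explicitly, one may take M_k = (1/(2π)) Γ(k) e^{-μk + (σ²/2)k²} ∫_{-∞}^∞ e^{π|t| − (σ²/2)t²} dt. -/

import Mathlib

open MeasureTheory Complex Set

/-- The analytic continuation of the lognormal Laplace transform, expressed via
the Mellin–Barnes integral along the line Re(s) = k. -/
noncomputable def lognormalLaplaceAC (μ σ k : ℝ) (z : ℂ) : ℂ :=
  (1 / (2 * Real.pi)) * ∫ t : ℝ,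
    z ^ (-((k:ℂ) + t * Complex.I)) * Complex.Gamma (k + t * Complex.I) *
      Complex.exp (-(μ:ℂ) * (k + t * Complex.I) + (σ:ℂ)^2 / 2 * (k + t * Complex.I)^2)

/-! The Mellin–Barnes integrand is dominated by
`‖z‖ ^ (-k) * Γ(k) * exp (-μ k + σ² k² / 2) * exp (π |t| - σ² t² / 2)`:
`|arg z| ≤ π` controls `z ^ (-it)`, `|Γ(k + it)| ≤ Γ(k)` by the Euler integral,
and the Gaussian factor makes the majorant integrable. -/

theorem Complex.norm_Gamma_le_Gamma_re {s : ℂ} (hs : 0 < s.re) :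
    ‖Complex.Gamma s‖ ≤ Real.Gamma s.re := by
  rw [Complex.Gamma_eq_integral hs, Real.Gamma_eq_integral hs, Complex.GammaIntegral]
  refine norm_integral_le_of_norm_le (Real.GammaIntegral_convergent hs) ?_
  filter_upwards [ae_restrict_mem measurableSet_Ioi] with x hx
  rw [norm_mul, Complex.norm_real, Complex.norm_cpow_eq_rpow_re_of_pos hx]
  simp [abs_of_pos (Real.exp_pos _)]

theorem integrable_exp_mul_sub_mul_sq {b : ℝ} (hb : 0 < b) (c : ℝ) :
    Integrable (fun t : ℝ => Real.exp (c * t - b * t ^ 2)) := by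
  have complete_square : ∀ t : ℝ,
      c * t - b * t ^ 2 = c ^ 2 / (4 * b) + -b * (t - c / (2 * b)) ^ 2 := by
    intro t; field_simp; ring
  simp_rw [complete_square, Real.exp_add]
  exact ((integrable_exp_neg_mul_sq hb).comp_sub_right (c / (2 * b))).const_mul _

theorem integrable_exp_mul_abs_sub_mul_sq {b : ℝ} (hb : 0 < b) (c : ℝ) :
    Integrable (fun t : ℝ => Real.exp (c * |t| - b * t ^ 2)) := by
  refine ((integrable_exp_mul_sub_mul_sq hb c).add (integrable_exp_mul_sub_mul_sq hb (-c))).mono'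
    (by fun_prop) (Filter.Eventually.of_forall fun t => ?_)
  rw [Real.norm_of_nonneg (Real.exp_pos _).le]
  rcases abs_choice t with h | h <;> rw [h]
  · exact le_add_of_nonneg_right (Real.exp_pos _).le
  · rw [mul_neg, ← neg_mul]
    exact le_add_of_nonneg_left (Real.exp_pos _).le

theorem Complex.norm_cpow_neg_ofReal_add_mul_I_le {z : ℂ} (hz : z ≠ 0) (k t : ℝ) :
    ‖z ^ (-((k : ℂ) + t * I))‖ ≤ ‖z‖ ^ (-k) * Real.exp (Real.pi * |t|) := by
  have re_eq : (-((k : ℂ) + t * I)).re = -k := by simp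
  have im_eq : (-((k : ℂ) + t * I)).im = -t := by simp
  have arg_bound : z.arg * t ≤ Real.pi * |t| :=
    calc z.arg * t ≤ |z.arg| * |t| := by rw [← abs_mul]; exact le_abs_self _
      _ ≤ Real.pi * |t| := by gcongr; exact Complex.abs_arg_le_pi z
  rw [Complex.norm_cpow_of_ne_zero hz, re_eq, im_eq, mul_neg, Real.exp_neg, div_inv_eq_mul]
  gcongr

theorem norm_cexp_lognormal_exponent (μ σ k t : ℝ) :
    ‖Complex.exp (-(μ : ℂ) * (k + t * I) + (σ : ℂ) ^ 2 / 2 * (k + t * I) ^ 2)‖ =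
      Real.exp (-μ * k + σ ^ 2 / 2 * k ^ 2) * Real.exp (-(σ ^ 2 / 2 * t ^ 2)) := by
  rw [Complex.norm_exp, ← Real.exp_add]
  congr 1
  simp only [neg_mul, pow_two, add_re, neg_re, mul_re, ofReal_re, I_re, mul_zero, ofReal_im, I_im,
    mul_one, sub_self, add_zero, add_im, mul_im, zero_add, zero_mul, sub_zero, div_ofNat_re,
    div_ofNat_im, zero_div]
  ring

theorem norm_lognormal_mellin_integrand_le (μ σ : ℝ) {k : ℝ} (hk : 0 < k) {z : ℂ}
    (hz : z ≠ 0) (t : ℝ) :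
    ‖z ^ (-((k : ℂ) + t * I)) * Complex.Gamma (k + t * I) *
        Complex.exp (-(μ : ℂ) * (k + t * I) + (σ : ℂ) ^ 2 / 2 * (k + t * I) ^ 2)‖ ≤
      ‖z‖ ^ (-k) * Real.Gamma k * Real.exp (-μ * k + σ ^ 2 / 2 * k ^ 2) *
        Real.exp (Real.pi * |t| - σ ^ 2 / 2 * t ^ 2) := by
  have re_eq : ((k : ℂ) + t * I).re = k := by simp
  have gamma_bound : ‖Complex.Gamma (k + t * I)‖ ≤ Real.Gamma k := by
    have := Complex.norm_Gamma_le_Gamma_re (s := k + t * I) (by rwa [re_eq])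
    rwa [re_eq] at this
  rw [norm_mul, norm_mul, norm_cexp_lognormal_exponent, sub_eq_add_neg,
    Real.exp_add (Real.pi * |t|)]
  calc _ ≤ ‖z‖ ^ (-k) * Real.exp (Real.pi * |t|) * Real.Gamma k *
        (Real.exp (-μ * k + σ ^ 2 / 2 * k ^ 2) * Real.exp (-(σ ^ 2 / 2 * t ^ 2))) := by
        gcongr
        exact Complex.norm_cpow_neg_ofReal_add_mul_I_le hz k t
    _ = _ := by ring

/-- For each k > 0 there exists M_k > 0 (explicitly,
M_k = (1/(2π)) Γ(k) e^{-μk + (σ²/2)k²} ∫ e^{π|t| − (σ²/2)t²} dt) such that the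
analytically continued lognormal Laplace transform satisfies
|φ(z)| ≤ M_k |z|^{-k} on ℂ \ (-∞,0]. -/
theorem lognormal_laplace_decay (μ σ : ℝ) (hσ : 0 < σ) (k : ℝ) (hk : 0 < k) :
    ∃ M : ℝ, 0 < M ∧
      M = (1 / (2 * Real.pi)) * Real.Gamma k * Real.exp (-μ * k + σ^2 / 2 * k^2) *
            ∫ t : ℝ, Real.exp (Real.pi * |t| - σ^2 / 2 * t^2) ∧
      ∀ z ∈ Complex.slitPlane, ‖lognormalLaplaceAC μ σ k z‖ ≤ M * ‖z‖ ^ (-k) := by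
  have majorant_integrable :
      Integrable fun t : ℝ => Real.exp (Real.pi * |t| - σ ^ 2 / 2 * t ^ 2) :=
    integrable_exp_mul_abs_sub_mul_sq (by positivity) Real.pi
  refine ⟨_, ?_, rfl, fun z hz => ?_⟩
  · have := integral_exp_pos majorant_integrable
    have := Real.Gamma_pos_of_pos hk
    have := Real.pi_pos
    positivity
  have integral_bound := norm_integral_le_of_norm_le (majorant_integrable.const_mul _)
    (Filter.Eventually.of_forall
      (norm_lognormal_mellin_integrand_le μ σ hk (Complex.slitPlane_ne_zero hz)))
  rw [integral_const_mul] at integral_bound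
  have norm_prefactor : ‖(1 / (2 * Real.pi) : ℂ)‖ = 1 / (2 * Real.pi) := by
    rw [← ofReal_ofNat, ← ofReal_mul, ← ofReal_one, ← ofReal_div, norm_real,
      Real.norm_of_nonneg (by positivity)]
  rw [lognormalLaplaceAC, norm_mul, norm_prefactor]
  calc _ ≤ 1 / (2 * Real.pi) *
        (‖z‖ ^ (-k) * Real.Gamma k * Real.exp (-μ * k + σ ^ 2 / 2 * k ^ 2) *
          ∫ t : ℝ, Real.exp (Real.pi * |t| - σ ^ 2 / 2 * t ^ 2)) := by gcongr
    _ = _ := by ring
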